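/- arXiv:2204.01843 — 3 statements merged into one kernel-verified Lean document; each statement's English description precedes it below -/
import Mathlib

section
/- If D : J → C is a functor preserving finite products (with J and C cartesian categories) and D̄ : J → E is any functor with π ∘ D̄ = D, where π : E → C is a discrete opfibration preserving finite products, then D̄ also preserves finite products. -/
open CategoryTheory

/-- A lift of a morphism `f : π.obj x ⟶ c` in the base through `π`, with given domain `x`. -/
structure DOLift {E : Type u₁} {C : Type u₂} [Category.{v₁} E] [Category.{v₂} C]
    (π : E ⥤ C) {x : E} {c : C} (f : π.obj x ⟶ c) where
  top : E
  hom : x ⟶ top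
  w_obj : π.obj top = c
  w_map : π.map hom ≫ eqToHom w_obj = f

/-- A functor `π : E ⥤ C` is a discrete opfibration if every morphism of `C` whose domain
is in the image of `π` has a unique lift with any prescribed domain over it. -/
def IsDiscreteOpfibration {E : Type u₁} {C : Type u₂} [Category.{v₁} E] [Category.{v₂} C]
    (π : E ⥤ C) : Prop :=
  ∀ {x : E} {c : C} (f : π.obj x ⟶ c), ∃! _l : DOLift π f, True

open CategoryTheory.Limits

/-
A discrete opfibration is conservative: lifting the inverse of `π.map u` gives a candidate
inverse `v` of `u`; uniqueness of lifts of identities forces `u ≫ v = 𝟙` (and the codomain of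
`v` to be the domain of `u`), and `v ≫ u = 𝟙` because uniqueness of lifts also makes `π` faithful.
Since `π` also preserves finite products, it reflects them, so `Dbar` preserves finite products
because `Dbar ⋙ π = D` does.
-/

namespace IsDiscreteOpfibration

variable {E : Type u₁} {C : Type u₂} [Category.{v₁} E] [Category.{v₂} C] {π : E ⥤ C}

theorem subsingleton_lift (hπ : IsDiscreteOpfibration π) {x : E} {c : C} (f : π.obj x ⟶ c) :
    Subsingleton (DOLift π f) := by
  obtain ⟨l, -, hl⟩ := hπ f
  exact ⟨fun l₁ l₂ => (hl l₁ trivial).trans (hl l₂ trivial).symm⟩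

theorem faithful (hπ : IsDiscreteOpfibration π) : π.Faithful where
  map_injective {x y u v} huv := by
    have := hπ.subsingleton_lift (π.map u)
    have h : (⟨y, u, rfl, by simp⟩ : DOLift π (π.map u)) = ⟨y, v, rfl, by simp [huv]⟩ :=
      Subsingleton.elim _ _
    injection h

theorem eq_eqToHom_of_map_eq_id (hπ : IsDiscreteOpfibration π) {x y : E} (f : x ⟶ y)
    (hxy : π.obj y = π.obj x) (hf : π.map f ≫ eqToHom hxy = 𝟙 (π.obj x)) :
    ∃ e : x = y, f = eqToHom e := by
  have := hπ.subsingleton_lift (𝟙 (π.obj x))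
  have h : (⟨y, f, hxy, hf⟩ : DOLift π (𝟙 (π.obj x))) = ⟨x, 𝟙 x, rfl, by simp⟩ :=
    Subsingleton.elim _ _
  injection h with hyx hf'
  subst hyx
  exact ⟨rfl, eq_of_heq hf'⟩

theorem reflectsIsomorphisms (hπ : IsDiscreteOpfibration π) : π.ReflectsIsomorphisms where
  reflects {x y} u _ := by
    obtain ⟨⟨z, v, hzx, hv⟩, -⟩ := hπ (inv (π.map u))
    obtain ⟨rfl, huv⟩ := hπ.eq_eqToHom_of_map_eq_id (u ≫ v) hzx (by simp [hv])
    have hvu : v ≫ u = 𝟙 y := hπ.faithful.map_injective <| by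
      simpa [← hv] using IsIso.inv_hom_id (π.map u)
    exact ⟨v, huv, hvu⟩

end IsDiscreteOpfibration

theorem lift_of_cartesian_diagram_is_cartesian_general
    {J : Type w} [Category.{t} J] {E : Type u₁} {C : Type u₂}
    [Category.{v₁} E] [Category.{v₂} C]
    [HasFiniteProducts E]
    (π : E ⥤ C) (hπ : IsDiscreteOpfibration π) [PreservesFiniteProducts π]
    (D : J ⥤ C) [PreservesFiniteProducts D]
    (Dbar : J ⥤ E) (hDbar : Dbar ⋙ π = D) :
    Nonempty (PreservesFiniteProducts Dbar) := by
  subst hDbar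
  have := hπ.reflectsIsomorphisms
  exact ⟨preservesFiniteProducts_of_reflects_of_preserves Dbar π⟩

/-- If `D : J ⥤ C` preserves finite products and `Dbar : J ⥤ E` lifts `D`
through a finite-product-preserving discrete opfibration `π : E ⥤ C`, then `Dbar` also
preserves finite products. -/
theorem lift_of_cartesian_diagram_is_cartesian
    {J : Type w} [Category.{t} J] {E : Type u₁} {C : Type u₂}
    [Category.{v₁} E] [Category.{v₂} C]
    [HasFiniteProducts J] [HasFiniteProducts E] [HasFiniteProducts C]
    (π : E ⥤ C) (hπ : IsDiscreteOpfibration π) [PreservesFiniteProducts π]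
    (D : J ⥤ C) [PreservesFiniteProducts D]
    (Dbar : J ⥤ E) (hDbar : Dbar ⋙ π = D) :
    Nonempty (PreservesFiniteProducts Dbar) :=
  lift_of_cartesian_diagram_is_cartesian_general π hπ D Dbar hDbar
end

section
/- Given an initial functor R : J → J', a discrete opfibration π : E → C, and a commutative square with top D̄ : J → E, left R, right π, and bottom D' : J' → C (so that π ∘ D̄ = D' ∘ R), there exists a unique functor D̄' : J' → E with D̄' ∘ R = D̄ and π ∘ D̄' = D'. -/
open CategoryTheory

/-!
An object `a : R j ⟶ j'` of `R/j'` gives a morphism `π (Dbar j) = D' (R j) ⟶ D' j'`, whose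
unique lift starting at `Dbar j` has an endpoint over `D' j'`. That endpoint is invariant under
the morphisms of `R/j'`, so by connectedness it does not depend on `a`; it is the value of the
filler at `j'`. On a morphism `g` the filler is the unique lift of `D' g`; functoriality comes for
free because a discrete opfibration is faithful. Uniqueness needs only that every `R/j'` is
nonempty: any filler sends `j'` to the endpoint of the lift of `D' a`, by uniqueness of lifts.
-/

namespace CategoryTheory.Functor

theorem ext_of_comp_faithful {J : Type w} {E : Type u₁} {C : Type u₂} [Category.{t} J]
    [Category.{v₁} E] [Category.{v₂} C] (π : E ⥤ C) [π.Faithful] {G₁ G₂ : J ⥤ E}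
    (hobj : ∀ j, G₁.obj j = G₂.obj j) (h : G₁ ⋙ π = G₂ ⋙ π) : G₁ = G₂ :=
  Functor.ext hobj fun _ _ f => π.map_injective <| by
    simpa [eqToHom_map] using Functor.congr_hom h f

end CategoryTheory.Functor

namespace IsDiscreteOpfibration

variable {E : Type u₁} {C : Type u₂} [Category.{v₁} E] [Category.{v₂} C] {π : E ⥤ C}

theorem lift_eq (hπ : IsDiscreteOpfibration π) {x : E} {c : C} {f : π.obj x ⟶ c}
    (l l' : DOLift π f) : l = l' :=
  (hπ f).unique trivial trivial

theorem faithful_s13 (hπ : IsDiscreteOpfibration π) : π.Faithful where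
  map_injective {_ y} h h' w := by
    have := hπ.lift_eq (f := π.map h) ⟨y, h, rfl, by simp⟩ ⟨y, h', rfl, by simp [w]⟩
    exact eq_of_heq (DOLift.mk.inj this).2

variable (hπ : IsDiscreteOpfibration π)

noncomputable def lift {x : E} {c : C} (f : π.obj x ⟶ c) : DOLift π f :=
  (hπ f).exists.choose

theorem lift_comp_top {x : E} {c d : C} (f : π.obj x ⟶ c) (g : c ⟶ d) :
    (hπ.lift (f ≫ g)).top = (hπ.lift (eqToHom (hπ.lift f).w_obj ≫ g)).top :=
  congrArg DOLift.top <| hπ.lift_eq _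
    ⟨_, (hπ.lift f).hom ≫ (hπ.lift _).hom, (hπ.lift _).w_obj, by
      rw [π.map_comp, Category.assoc, (hπ.lift _).w_map, reassoc_of% (hπ.lift f).w_map]⟩

section Square

variable {J : Type w₁} {J' : Type w₂} [Category.{t₁} J] [Category.{t₂} J']
  {R : J ⥤ J'} {Dbar : J ⥤ E} {D' : J' ⥤ C} (hsq : Dbar ⋙ π = R ⋙ D')

include hπ in
theorem ext_of_nonempty_costructuredArrow (hR : ∀ j', Nonempty (CostructuredArrow R j'))
    {G₁ G₂ : J' ⥤ E} (h₁ : R ⋙ G₁ = R ⋙ G₂) (h₂ : G₁ ⋙ π = G₂ ⋙ π) : G₁ = G₂ := by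
  have := hπ.faithful_s13
  refine Functor.ext_of_comp_faithful π (fun j' => ?_) h₂
  obtain ⟨a⟩ := hR j'
  exact congrArg DOLift.top <| hπ.lift_eq (f := π.map (G₂.map a.hom))
    ⟨_, eqToHom (Functor.congr_obj h₁ a.left).symm ≫ G₁.map a.hom, Functor.congr_obj h₂ j', by
      simp [eqToHom_map, ← Functor.comp_map, Functor.congr_hom h₂ a.hom]⟩
    ⟨_, G₂.map a.hom, rfl, by simp⟩

def squareArrow {j' : J'} (a : CostructuredArrow R j') : π.obj (Dbar.obj a.left) ⟶ D'.obj j' :=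
  eqToHom (Functor.congr_obj hsq a.left) ≫ D'.map a.hom

theorem lift_squareArrow_top_eq_of_hom {j' : J'} {a b : CostructuredArrow R j'} (m : a ⟶ b) :
    (hπ.lift (squareArrow hsq a)).top = (hπ.lift (squareArrow hsq b)).top :=
  congrArg DOLift.top <| hπ.lift_eq (hπ.lift _)
    ⟨_, Dbar.map m.left ≫ (hπ.lift _).hom, (hπ.lift _).w_obj, by
      rw [π.map_comp, Category.assoc, (hπ.lift _).w_map, ← Functor.comp_map,
        Functor.congr_hom hsq m.left]
      simp only [squareArrow, Functor.comp_map, Category.assoc, eqToHom_trans_assoc,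
        eqToHom_refl, Category.id_comp, ← D'.map_comp, CostructuredArrow.w m]⟩

theorem lift_squareArrow_top_eq {j' : J'} [IsPreconnected (CostructuredArrow R j')]
    (a b : CostructuredArrow R j') :
    (hπ.lift (squareArrow hsq a)).top = (hπ.lift (squareArrow hsq b)).top :=
  constant_of_preserves_morphisms (fun a => (hπ.lift (squareArrow hsq a)).top)
    (fun _ _ m => hπ.lift_squareArrow_top_eq_of_hom hsq m) a b

variable [R.Initial]

noncomputable def fillerObj (j' : J') : E :=
  (hπ.lift (squareArrow hsq (Classical.arbitrary (CostructuredArrow R j')))).top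

theorem fillerObj_eq {j' : J'} (a : CostructuredArrow R j') :
    hπ.fillerObj hsq j' = (hπ.lift (squareArrow hsq a)).top :=
  hπ.lift_squareArrow_top_eq hsq _ a

theorem π_obj_fillerObj (j' : J') : π.obj (hπ.fillerObj hsq j') = D'.obj j' :=
  (hπ.lift _).w_obj

theorem lift_top_eq_fillerObj {j'₁ j'₂ : J'} (g : j'₁ ⟶ j'₂) :
    (hπ.lift (eqToHom (hπ.π_obj_fillerObj hsq j'₁) ≫ D'.map g)).top = hπ.fillerObj hsq j'₂ := by
  rw [hπ.fillerObj_eq hsq ((CostructuredArrow.map g).obj (Classical.arbitrary _)),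
    show squareArrow hsq ((CostructuredArrow.map g).obj _) = squareArrow hsq _ ≫ D'.map g by
      simp [squareArrow]]
  exact (hπ.lift_comp_top _ _).symm

noncomputable def fillerMap {j'₁ j'₂ : J'} (g : j'₁ ⟶ j'₂) :
    hπ.fillerObj hsq j'₁ ⟶ hπ.fillerObj hsq j'₂ :=
  (hπ.lift _).hom ≫ eqToHom (hπ.lift_top_eq_fillerObj hsq g)

theorem π_map_fillerMap_heq {j'₁ j'₂ : J'} (g : j'₁ ⟶ j'₂) :
    π.map (hπ.fillerMap hsq g) ≍ D'.map g := by
  rw [fillerMap, π.map_comp, eqToHom_map]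
  exact (comp_eqToHom_heq _ _).trans <| (comp_eqToHom_heq _ _).symm.trans <|
    (heq_of_eq (hπ.lift _).w_map).trans (eqToHom_comp_heq _ _)

noncomputable def filler : J' ⥤ E :=
  have := hπ.faithful_s13
  Functor.Faithful.div D' π (hπ.fillerObj hsq) (hπ.π_obj_fillerObj hsq) (hπ.fillerMap hsq)
    (hπ.π_map_fillerMap_heq hsq _)

theorem filler_comp : hπ.filler hsq ⋙ π = D' :=
  Functor.hext (hπ.π_obj_fillerObj hsq) fun _ _ => hπ.π_map_fillerMap_heq hsq

theorem comp_filler : R ⋙ hπ.filler hsq = Dbar := by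
  have := hπ.faithful_s13
  refine Functor.ext_of_comp_faithful π (fun j => ?_) ?_
  · exact (hπ.fillerObj_eq hsq (CostructuredArrow.mk (𝟙 (R.obj j)))).trans <|
      congrArg DOLift.top <| hπ.lift_eq _ ⟨_, 𝟙 _, Functor.congr_obj hsq j, by simp [squareArrow]⟩
  · rw [Functor.assoc, hπ.filler_comp hsq, hsq]

end Square

end IsDiscreteOpfibration

/-- Unique diagonal fillers for the comprehensive factorization system:
given an initial functor `R : J ⥤ J'`, a discrete opfibration `π : E ⥤ C`, and a commuting
square `Dbar ⋙ π = R ⋙ D'`, there is a unique functor `Dbar' : J' ⥤ E` with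
`R ⋙ Dbar' = Dbar` and `Dbar' ⋙ π = D'`. -/
theorem initial_dopf_unique_lifting
    {J : Type w₁} {J' : Type w₂} [Category.{t₁} J] [Category.{t₂} J']
    {E : Type u₁} {C : Type u₂} [Category.{v₁} E] [Category.{v₂} C]
    (R : J ⥤ J') (hR : R.Initial)
    (π : E ⥤ C) (hπ : IsDiscreteOpfibration π)
    (Dbar : J ⥤ E) (D' : J' ⥤ C) (hsq : Dbar ⋙ π = R ⋙ D') :
    ∃! Dbar' : J' ⥤ E, R ⋙ Dbar' = Dbar ∧ Dbar' ⋙ π = D' := by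
  have := hR
  refine ⟨hπ.filler hsq, ⟨hπ.comp_filler hsq, hπ.filler_comp hsq⟩, fun G ⟨hG₁, hG₂⟩ => ?_⟩
  exact hπ.ext_of_nonempty_costructuredArrow (fun _ => inferInstance)
    (hG₁.trans (hπ.comp_filler hsq).symm) (hG₂.trans (hπ.filler_comp hsq).symm)
end

section
/- If (R, ρ) : (I, D) → (J, E) and (S, σ) : (J, E) → (K, F) are relatively initial morphisms in Diag→(C), then their composite (R·S, (σ * R) ∘ ρ) : (I, D) → (K, F) is relatively initial. -/
open CategoryTheory

section RelCommaDefs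

variable {J : Type w₁} {J' : Type w₂} [Category.{t₁} J] [Category.{t₂} J']
variable {C : Type u₂} [Category.{v₂} C]

/-- An object of the relative comma category `(R,ρ)/j'` attached to a morphism
`(R, ρ) : (J, D) → (J', D')` of `Diag→(C)` (so `ρ : D ⟶ R ⋙ D'`): a pair of an object
`j : J` and a morphism `f : R j ⟶ j'`. -/
structure RelComma {R : J ⥤ J'} {D : J ⥤ C} {D' : J' ⥤ C}
    (ρ : D ⟶ R ⋙ D') (j' : J') where
  j : J
  f : R.obj j ⟶ j'

/-- Morphisms of `(R,ρ)/j'` are morphisms `h : j ⟶ k` of `J` making the pentagon involving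
`ρ`, `D` and `D'` commute. -/
instance RelComma.category {R : J ⥤ J'} {D : J ⥤ C} {D' : J' ⥤ C}
    (ρ : D ⟶ R ⋙ D') (j' : J') : Category (RelComma ρ j') where
  Hom a b := { h : a.j ⟶ b.j // D.map h ≫ ρ.app b.j ≫ D'.map b.f = ρ.app a.j ≫ D'.map a.f }
  id a := ⟨𝟙 a.j, by simp⟩
  comp f g := ⟨f.1 ≫ g.1, by rw [Functor.map_comp, Category.assoc, g.2, f.2]⟩
  id_comp f := Subtype.ext (Category.id_comp f.1)
  comp_id f := Subtype.ext (Category.comp_id f.1)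
  assoc f g h := Subtype.ext (Category.assoc f.1 g.1 h.1)

/-- A morphism `(R, ρ) : (J, D) → (J', D')` of `Diag→(C)` is *relatively initial* if each
relative comma category `(R,ρ)/j'` is (nonempty and) connected. -/
def RelativelyInitial {R : J ⥤ J'} {D : J ⥤ C} {D' : J' ⥤ C}
    (ρ : D ⟶ R ⋙ D') : Prop :=
  ∀ j' : J', IsConnected (RelComma ρ j')

end RelCommaDefs

/-!
Each `x = (j, g)` of `(S,σ)/k` gives a functor `(R,ρ)/j ⥤ (R ⋙ S, ρ ≫ σR)/k`, `(i, f) ↦ (i, S f ≫ g)`,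
and every object `(i, f)` of `(R ⋙ S, ρ ≫ σR)/k` is the image of `(i, 𝟙)` for `x = (R i, f)`.
Images of one fibre are connected because `(R,ρ)/j` is; a morphism `u : x₁ ⟶ x₂` of `(S,σ)/k`
links the two fibres through `𝟙 i : (i, S f ≫ x₁.f) ⟶ (i, S (f ≫ u) ≫ x₂.f)`, the square for
it being naturality of `σ` plus the condition on `u`. Connectedness of `(S,σ)/k` then connects
all images.
-/

namespace RelComma

variable {I : Type w₁} {J : Type w₂} {K : Type w₃}
    [Category.{t₁} I] [Category.{t₂} J] [Category.{t₃} K]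
    {C : Type u₂} [Category.{v₂} C]
    {R : I ⥤ J} {S : J ⥤ K}
    {D : I ⥤ C} {E : J ⥤ C} {F : K ⥤ C}
    (ρ : D ⟶ R ⋙ E) (σ : E ⟶ S ⋙ F) {k : K}

def postcomp (x : RelComma σ k) :
    RelComma ρ x.j ⥤
      RelComma (show D ⟶ (R ⋙ S) ⋙ F from ρ ≫ Functor.whiskerLeft R σ) k where
  obj y := ⟨y.j, S.map y.f ≫ x.f⟩
  map {y₁ y₂} h := ⟨h.1, by
    have n₁ := σ.naturality y₁.f
    have n₂ := σ.naturality y₂.f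
    simp only [Functor.comp_map] at n₁ n₂
    simp only [NatTrans.comp_app, Functor.whiskerLeft_app, Functor.map_comp, Category.assoc]
    rw [reassoc_of% n₂.symm, reassoc_of% n₁.symm, reassoc_of% h.2]⟩

variable {ρ σ}

theorem postcomp_obj_self
    (a : RelComma (show D ⟶ (R ⋙ S) ⋙ F from ρ ≫ Functor.whiskerLeft R σ) k) :
    (postcomp ρ σ (⟨R.obj a.j, a.f⟩ : RelComma σ k)).obj ⟨a.j, 𝟙 (R.obj a.j)⟩ = a := by
  cases a
  simp [postcomp]

def postcompObjHom {x₁ x₂ : RelComma σ k} (u : x₁ ⟶ x₂) (y : RelComma ρ x₁.j) :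
    (postcomp ρ σ x₁).obj y ⟶ (postcomp ρ σ x₂).obj ⟨y.j, y.f ≫ u.1⟩ :=
  ⟨𝟙 y.j, by
    have n₁ := σ.naturality y.f
    have n₂ := σ.naturality u.1
    simp only [Functor.comp_map] at n₁ n₂
    simp only [postcomp, NatTrans.comp_app, Functor.whiskerLeft_app, Functor.map_comp,
      Category.assoc]
    rw [reassoc_of% n₁.symm, reassoc_of% n₂.symm, u.2, reassoc_of% n₁, D.map_id, Category.id_comp]⟩

theorem zigzag_postcomp_obj_of_isPreconnected {x : RelComma σ k}
    [IsPreconnected (RelComma ρ x.j)] (y₁ y₂ : RelComma ρ x.j) :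
    Zigzag ((postcomp ρ σ x).obj y₁) ((postcomp ρ σ x).obj y₂) :=
  zigzag_obj_of_zigzag _ (isPreconnected_zigzag y₁ y₂)

theorem zigzag_postcomp_obj_of_hom (hρ : RelativelyInitial ρ) {x₁ x₂ : RelComma σ k}
    (u : x₁ ⟶ x₂) (y₁ : RelComma ρ x₁.j) (y₂ : RelComma ρ x₂.j) :
    Zigzag ((postcomp ρ σ x₁).obj y₁) ((postcomp ρ σ x₂).obj y₂) :=
  have := hρ x₂.j
  (Zigzag.of_hom (postcompObjHom u y₁)).trans (zigzag_postcomp_obj_of_isPreconnected _ _)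

theorem zigzag_postcomp_obj (hρ : RelativelyInitial ρ) [IsPreconnected (RelComma σ k)]
    (x₁ x₂ : RelComma σ k) (y₁ : RelComma ρ x₁.j) (y₂ : RelComma ρ x₂.j) :
    Zigzag ((postcomp ρ σ x₁).obj y₁) ((postcomp ρ σ x₂).obj y₂) := by
  refine equiv_relation
    (fun x₁ x₂ => ∀ y₁ y₂, Zigzag ((postcomp ρ σ x₁).obj y₁) ((postcomp ρ σ x₂).obj y₂))
    ⟨fun x => ?refl, fun h y₁ y₂ => (h y₂ y₁).symm, fun {_ x₂ _} h₁₂ h₂₃ y₁ y₃ => ?trans⟩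
    (fun u => zigzag_postcomp_obj_of_hom hρ u) x₁ x₂ y₁ y₂
  case refl =>
    have := hρ x.j
    exact zigzag_postcomp_obj_of_isPreconnected
  case trans =>
    obtain ⟨y₂⟩ := (hρ x₂.j).is_nonempty
    exact (h₁₂ y₁ y₂).trans (h₂₃ y₂ y₃)

end RelComma

open RelComma in
/-- The composite of two relatively initial morphisms of `Diag→(C)` is
relatively initial: if `(R, ρ) : (I, D) → (J, E)` and `(S, σ) : (J, E) → (K, F)` are
relatively initial, so is `(R ⋙ S, ρ ≫ whiskerLeft R σ)`. -/
theorem relativelyInitial_comp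
    {I : Type w₁} {J : Type w₂} {K : Type w₃}
    [Category.{t₁} I] [Category.{t₂} J] [Category.{t₃} K]
    {C : Type u₂} [Category.{v₂} C]
    {R : I ⥤ J} {S : J ⥤ K}
    {D : I ⥤ C} {E : J ⥤ C} {F : K ⥤ C}
    (ρ : D ⟶ R ⋙ E) (σ : E ⟶ S ⋙ F)
    (hρ : RelativelyInitial ρ) (hσ : RelativelyInitial σ) :
    RelativelyInitial
      (show D ⟶ (R ⋙ S) ⋙ F from ρ ≫ Functor.whiskerLeft R σ) := by
  intro k
  have := hσ k
  obtain ⟨x⟩ := (hσ k).is_nonempty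
  obtain ⟨y⟩ := (hρ x.j).is_nonempty
  have : Nonempty (RelComma _ k) := ⟨(postcomp ρ σ x).obj y⟩
  refine zigzag_isConnected fun a b => ?_
  rw [← postcomp_obj_self a, ← postcomp_obj_self b]
  exact zigzag_postcomp_obj hρ _ _ _ _
end
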